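/- arXiv:2503.16250 — 2 statements merged into one kernel-verified Lean document; each statement's English description precedes it below -/
import Mathlib

section
/- Let n ≥ 3 and suppose S ∈ ℤ^{n+1} satisfies Q(S,S) = −2, Q(S, D₂) = 0, and c₁(S) = 0. Then either there exist an index j with 2 ≤ j ≤ n−1 and a sign ε ∈ {+1,−1} such that S = ε(H − E₁ − E_j − E_n), or there exist distinct indices j, r with 2 ≤ j, r ≤ n−1 such that S = E_j − E_r. -/
open Finset
open Fin.NatCast

/-- The class of the line `H` in `H₂(Xₙ;ℤ) ≅ ℤ^{n+1}` (coordinate `0`). -/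
def Hv (n : ℕ) : Fin (n + 1) → ℤ := Pi.single 0 1

/-- The exceptional class `E_j` in `H₂(Xₙ;ℤ) ≅ ℤ^{n+1}` (coordinate `j`, for `1 ≤ j ≤ n`). -/
def Ev (n : ℕ) (j : ℕ) : Fin (n + 1) → ℤ := Pi.single (j : Fin (n + 1)) 1

/-- The intersection form of `Xₙ = ℂP² # n ℂP²‾`: `Q(H,H) = 1`, `Q(E_j,E_j) = -1`,
distinct basis vectors orthogonal. -/
def Qf (n : ℕ) (x y : Fin (n + 1) → ℤ) : ℤ :=
  x 0 * y 0 - ∑ j ∈ Finset.Icc 1 n, x (j : Fin (n + 1)) * y (j : Fin (n + 1))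

/-- Pairing with the first Chern class: `c₁(x₀H + Σ x_j E_j) = 3x₀ + Σ x_j`. -/
def c₁ (n : ℕ) (x : Fin (n + 1) → ℤ) : ℤ :=
  3 * x 0 + ∑ j ∈ Finset.Icc 1 n, x (j : Fin (n + 1))

/-- The class `D₂ = 3H - 2E₁ - Eₙ`. -/
def D₂ (n : ℕ) : Fin (n + 1) → ℤ := 3 • Hv n - 2 • Ev n 1 - Ev n n

/-! Write `S = aH + ∑ sⱼEⱼ`. Orthogonality to `D₂` and `c₁(S) = 0` give `sₙ = -3a - 2s₁` and
`∑_{2 ≤ j ≤ n-1} sⱼ = s₁`; substituting into `Q(S,S) = -2` gives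
`(4a + 3s₁)² + s₁² = 2 (2 - ∑ sⱼ²) ≤ 2 (2 - |s₁|)`, so `(a, s₁)` is `(0, 0)` or `±(1, -1)`.
Accordingly `∑ sⱼ² = 2` with `∑ sⱼ = 0`, forcing middle coordinates `1, -1, 0, …`, or
`∑ sⱼ² = 1`, forcing a single middle coordinate `∓1`. -/

section Coordinates

variable {n : ℕ}

lemma Hv_apply_natCast {m : ℕ} (hm : m ≤ n) : Hv n m = if m = 0 then 1 else 0 := by
  simp [Hv, Pi.single_apply, Fin.ext_iff, Fin.val_cast_of_lt (Nat.lt_succ_of_le hm)]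

lemma Ev_apply_natCast {a m : ℕ} (ha : a ≤ n) (hm : m ≤ n) :
    Ev n a m = if m = a then 1 else 0 := by
  simp [Ev, Pi.single_apply, Fin.ext_iff, Fin.val_cast_of_lt (Nat.lt_succ_of_le hm),
    Fin.val_cast_of_lt (Nat.lt_succ_of_le ha)]

lemma funext_natCast {x y : Fin (n + 1) → ℤ} (h : ∀ m ≤ n, x m = y m) : x = y :=
  funext fun k => by simpa using h k (Nat.lt_succ_iff.mp k.isLt)

lemma eq_smul_Hv_add_sum_smul_Ev (x : Fin (n + 1) → ℤ) :
    x = x 0 • Hv n + ∑ j ∈ Icc 1 n, x j • Ev n j := by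
  refine funext_natCast fun m hm => ?_
  have hEv : ∀ j ∈ Icc 1 n, (x j • Ev n j) (m : Fin (n + 1)) = if m = j then x m else 0 := by
    intro j hj
    rw [Pi.smul_apply, Ev_apply_natCast (mem_Icc.mp hj).2 hm]
    split_ifs with h <;> simp [h]
  rw [Pi.add_apply, Finset.sum_apply, sum_congr rfl hEv, sum_ite_eq, Pi.smul_apply,
    Hv_apply_natCast hm]
  rcases Nat.eq_zero_or_pos m with rfl | hm0
  · simp
  · simp [mem_Icc, hm0.ne', Nat.one_le_iff_ne_zero.mpr hm0.ne', hm]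

lemma sum_Icc_one_eq {M : Type*} [AddCommMonoid M] (hn : 2 ≤ n) (f : ℕ → M) :
    ∑ j ∈ Icc 1 n, f j = f 1 + f n + ∑ j ∈ Icc 2 (n - 1), f j := by
  have hsplit : Icc 1 n = insert 1 (insert n (Icc 2 (n - 1))) := by
    ext m; simp only [mem_Icc, mem_insert]; omega
  rw [hsplit, sum_insert (by simp; omega), sum_insert (by simp; omega), add_assoc]

lemma eq_smul_Hv_add_sum_smul_Ev' (hn : 2 ≤ n) (x : Fin (n + 1) → ℤ) :
    x = x 0 • Hv n + x 1 • Ev n 1 + x n • Ev n n + ∑ j ∈ Icc 2 (n - 1), x j • Ev n j := by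
  conv_lhs => rw [eq_smul_Hv_add_sum_smul_Ev x]
  rw [sum_Icc_one_eq hn, Nat.cast_one]
  abel

lemma Qf_self_eq (hn : 2 ≤ n) (x : Fin (n + 1) → ℤ) :
    Qf n x x = x 0 ^ 2 - x 1 ^ 2 - x n ^ 2 - ∑ j ∈ Icc 2 (n - 1), x j ^ 2 := by
  simp only [Qf, sum_Icc_one_eq hn, Nat.cast_one, sq]
  ring

lemma c₁_eq (hn : 2 ≤ n) (x : Fin (n + 1) → ℤ) :
    c₁ n x = 3 * x 0 + x 1 + x n + ∑ j ∈ Icc 2 (n - 1), x j := by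
  simp only [c₁, sum_Icc_one_eq hn, Nat.cast_one]
  ring

lemma D₂_apply_natCast {m : ℕ} (hn : 1 ≤ n) (hm : m ≤ n) :
    D₂ n m = 3 * (if m = 0 then 1 else 0) - 2 * (if m = 1 then 1 else 0) -
      (if m = n then 1 else 0) := by
  simp [D₂, Hv_apply_natCast hm, Ev_apply_natCast hn hm, Ev_apply_natCast le_rfl hm]

lemma Qf_D₂_eq (hn : 2 ≤ n) (x : Fin (n + 1) → ℤ) :
    Qf n x (D₂ n) = 3 * x 0 + 2 * x 1 + x n := by
  have hT : ∀ j ∈ Icc 2 (n - 1), x j * D₂ n j = 0 := fun j hj => by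
    obtain ⟨hj2, hjn⟩ := mem_Icc.mp hj
    rw [D₂_apply_natCast (by omega) (by omega)]
    simp [show j ≠ 0 by omega, show j ≠ 1 by omega, show j ≠ n by omega]
  have h0 : D₂ n 0 = 3 := by
    simpa [show 0 ≠ n by omega] using D₂_apply_natCast (n := n) (m := 0) (by omega) (by omega)
  have h1 : D₂ n 1 = -2 := by
    simpa [show 1 ≠ n by omega] using D₂_apply_natCast (n := n) (m := 1) (by omega) (by omega)
  have hn' : D₂ n n = -1 := by
    simpa [show n ≠ 0 by omega, show n ≠ 1 by omega] using
      D₂_apply_natCast (n := n) (by omega) le_rfl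
  rw [Qf, sum_Icc_one_eq hn, sum_eq_zero hT, Nat.cast_one, h0, h1, hn']
  ring

end Coordinates

section SumsOfSquares

variable {ι : Type*} {s : Finset ι} {f : ι → ℤ}

lemma abs_sum_le_sum_sq : |∑ i ∈ s, f i| ≤ ∑ i ∈ s, f i ^ 2 :=
  (abs_sum_le_sum_abs f s).trans (sum_le_sum fun i _ =>
    (Int.abs_eq_natAbs (f i)).trans_le (Int.natAbs_le_self_sq (f i)))

lemma eq_zero_of_sum_sq_le {j : ι} (hj : j ∈ s) (h : ∑ i ∈ s, f i ^ 2 ≤ f j ^ 2) :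
    ∀ k ∈ s, k ≠ j → f k = 0 := by
  classical
  intro k hk hkj
  have hpair : f k ^ 2 + f j ^ 2 ≤ ∑ i ∈ s, f i ^ 2 := by
    rw [← sum_pair (f := fun i => f i ^ 2) hkj]
    exact sum_le_sum_of_subset_of_nonneg (insert_subset hk (singleton_subset_iff.mpr hj))
      fun i _ _ => sq_nonneg (f i)
  exact sq_eq_zero_iff.mp (le_antisymm (by linarith) (sq_nonneg (f k)))

lemma exists_forall_ne_eq_zero_of_sum_sq_eq_one (h : ∑ i ∈ s, f i ^ 2 = 1) :
    ∃ j ∈ s, ∀ k ∈ s, k ≠ j → f k = 0 := by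
  obtain ⟨j, hj, hfj⟩ := exists_ne_zero_of_sum_ne_zero (h ▸ one_ne_zero)
  refine ⟨j, hj, eq_zero_of_sum_sq_le (f := f) hj ?_⟩
  have := (sq_nonneg (f j)).lt_of_ne' hfj
  omega

lemma exists_eq_pair_of_sum_sq_eq_two (h₁ : ∑ i ∈ s, f i = 0) (h₂ : ∑ i ∈ s, f i ^ 2 = 2) :
    ∃ j ∈ s, ∃ r ∈ s, j ≠ r ∧ f j = 1 ∧ f r = -1 ∧ ∀ k ∈ s, k ≠ j → k ≠ r → f k = 0 := by
  classical
  obtain ⟨j, hj, hfj⟩ := exists_ne_zero_of_sum_ne_zero (h₂ ▸ two_ne_zero)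
  have hj1 : f j ^ 2 = 1 := by
    by_contra hne
    have hzero := eq_zero_of_sum_sq_le (f := f) hj (by
      have := (sq_nonneg (f j)).lt_of_ne' hfj
      omega)
    rw [sum_eq_single_of_mem j hj hzero] at h₁
    simp [h₁] at hfj
  have hrest : ∑ i ∈ s.erase j, f i ^ 2 = 1 := by
    have := sum_erase_add s (fun i => f i ^ 2) hj
    omega
  obtain ⟨r, hr, hzero⟩ := exists_forall_ne_eq_zero_of_sum_sq_eq_one hrest
  obtain ⟨hrj, hrs⟩ := mem_erase.mp hr
  have hzero' : ∀ k ∈ s, k ≠ j → k ≠ r → f k = 0 := fun k hk hkj hkr =>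
    hzero k (mem_erase.mpr ⟨hkj, hk⟩) hkr
  have hsum : f j + f r = 0 := by
    rw [← h₁, sum_eq_add_of_mem j r hj hrs hrj.symm fun k hk hk' => hzero' k hk hk'.1 hk'.2]
  rcases sq_eq_one_iff.mp hj1 with h | h
  · exact ⟨j, hj, r, hrs, hrj.symm, h, by omega, hzero'⟩
  · exact ⟨r, hrs, j, hj, hrj, by omega, h, fun k hk hkr hkj => hzero' k hk hkj hkr⟩

end SumsOfSquares

lemma minus_two_coeff_cases {a s₁ sₙ M Q : ℤ} (hQ : |M| ≤ Q) (hS : a ^ 2 - s₁ ^ 2 - sₙ ^ 2 - Q = -2)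
    (hD : 3 * a + 2 * s₁ + sₙ = 0) (hc : 3 * a + s₁ + sₙ + M = 0) :
    (a = 0 ∧ s₁ = 0 ∧ sₙ = 0 ∧ M = 0 ∧ Q = 2) ∨
      ∃ ε : ℤ, (ε = 1 ∨ ε = -1) ∧ a = ε ∧ s₁ = -ε ∧ sₙ = -ε ∧ M = -ε ∧ Q = 1 := by
  obtain rfl : sₙ = -3 * a - 2 * s₁ := by omega
  obtain rfl : s₁ = M := by omega
  have hsq : (4 * a + 3 * s₁) ^ 2 + s₁ ^ 2 + 2 * |s₁| ≤ 4 := by nlinarith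
  have hs : |s₁| ≤ 1 := by nlinarith [sq_abs s₁, sq_nonneg (4 * a + 3 * s₁)]
  have ha : |4 * a + 3 * s₁| ≤ 2 := by nlinarith [sq_abs (4 * a + 3 * s₁), abs_nonneg s₁]
  rw [abs_le] at hs ha
  obtain ⟨hs_lo, hs_hi⟩ := hs
  obtain ⟨ha_lo, ha_hi⟩ : -1 ≤ a ∧ a ≤ 1 := by omega
  interval_cases s₁ <;> interval_cases a <;> norm_num at hS hQ ⊢ <;> omega

section Classes

variable {n : ℕ} {x : Fin (n + 1) → ℤ}

lemma exists_eq_smul_ternary_class (hn : 2 ≤ n) {ε : ℤ} (h0 : x 0 = ε) (h1 : x 1 = -ε)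
    (hn' : x n = -ε) (hM : ∑ j ∈ Icc 2 (n - 1), x j = -ε)
    (hQ : ∑ j ∈ Icc 2 (n - 1), x j ^ 2 = 1) :
    ∃ j, 2 ≤ j ∧ j ≤ n - 1 ∧ x = ε • (Hv n - Ev n 1 - Ev n j - Ev n n) := by
  obtain ⟨j, hj, hzero⟩ := exists_forall_ne_eq_zero_of_sum_sq_eq_one hQ
  rw [sum_eq_single_of_mem j hj hzero] at hM
  obtain ⟨hj2, hjn⟩ := mem_Icc.mp hj
  refine ⟨j, hj2, hjn, ?_⟩
  conv_lhs => rw [eq_smul_Hv_add_sum_smul_Ev' hn x]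
  rw [sum_eq_single_of_mem j hj fun k hk hkj => by rw [hzero k hk hkj, zero_smul], h0, h1, hn',
    hM]
  module

lemma exists_eq_binary_class (hn : 2 ≤ n) (h0 : x 0 = 0) (h1 : x 1 = 0) (hn' : x n = 0)
    (hM : ∑ j ∈ Icc 2 (n - 1), x j = 0) (hQ : ∑ j ∈ Icc 2 (n - 1), x j ^ 2 = 2) :
    ∃ j r : ℕ, 2 ≤ j ∧ j ≤ n - 1 ∧ 2 ≤ r ∧ r ≤ n - 1 ∧ j ≠ r ∧ x = Ev n j - Ev n r := by
  obtain ⟨j, hj, r, hr, hjr, hxj, hxr, hzero⟩ := exists_eq_pair_of_sum_sq_eq_two hM hQ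
  obtain ⟨hj2, hjn⟩ := mem_Icc.mp hj
  obtain ⟨hr2, hrn⟩ := mem_Icc.mp hr
  refine ⟨j, r, hj2, hjn, hr2, hrn, hjr, ?_⟩
  conv_lhs => rw [eq_smul_Hv_add_sum_smul_Ev' hn x]
  rw [sum_eq_add_of_mem j r hj hr hjr fun k hk hk' => by rw [hzero k hk hk'.1 hk'.2, zero_smul],
    h0, h1, hn', hxj, hxr]
  module

end Classes

/-- Classification of the classes of square `-2` with `c₁ = 0` orthogonal to
`D₂ = 3H - 2E₁ - Eₙ`: they are the ternary classes `±(H - E₁ - E_j - Eₙ)` with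
`2 ≤ j ≤ n-1`, or the binary classes `E_j - E_r` with `2 ≤ j, r ≤ n-1`, `j ≠ r`. -/
theorem minus_two_classes (n : ℕ) (hn : 3 ≤ n) (S : Fin (n + 1) → ℤ)
    (hSS : Qf n S S = -2) (hSD : Qf n S (D₂ n) = 0) (hc : c₁ n S = 0) :
    (∃ j : ℕ, 2 ≤ j ∧ j ≤ n - 1 ∧ ∃ ε : ℤ, (ε = 1 ∨ ε = -1) ∧
        S = ε • (Hv n - Ev n 1 - Ev n j - Ev n n)) ∨
    (∃ j r : ℕ, 2 ≤ j ∧ j ≤ n - 1 ∧ 2 ≤ r ∧ r ≤ n - 1 ∧ j ≠ r ∧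
        S = Ev n j - Ev n r) := by
  have h2 : 2 ≤ n := by omega
  rw [Qf_self_eq h2] at hSS
  rw [Qf_D₂_eq h2] at hSD
  rw [c₁_eq h2] at hc
  rcases minus_two_coeff_cases abs_sum_le_sum_sq hSS hSD hc with
    ⟨h0, h1, hn', hM, hQ⟩ | ⟨ε, hε, h0, h1, hn', hM, hQ⟩
  · exact Or.inr (exists_eq_binary_class h2 h0 h1 hn' hM hQ)
  · obtain ⟨j, hj2, hjn, hS⟩ := exists_eq_smul_ternary_class h2 h0 h1 hn' hM hQ
    exact Or.inl ⟨j, hj2, hjn, ε, hε, hS⟩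
end

section
/- For all integers n ≥ 3 and b, the equation 4((n−2)b−(n+1))² + 4((n+1)−(n+1)b)² + ((2n−1)b−2(n+1))² + 9(n−3)b² + 9(b−1)² = 9(n+2) holds if and only if b = 1. -/
/-- The Diophantine equation arising in the determination of the `(-n-2)`-sphere of a
`Cₙ`-configuration: for integers `n ≥ 3` and `b`, the equation holds iff `b = 1`. -/
theorem diophantine_C0 (n b : ℤ) (hn : 3 ≤ n) :
    (4 * ((n - 2) * b - (n + 1)) ^ 2 + 4 * ((n + 1) - (n + 1) * b) ^ 2
        + ((2 * n - 1) * b - 2 * (n + 1)) ^ 2 + 9 * (n - 3) * b ^ 2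
        + 9 * (b - 1) ^ 2 = 9 * (n + 2)) ↔ b = 1 := by
  constructor
  · intro h
    have h3 : 3 * ((b - 1) * ((4 * n ^ 2 - n + 1) * (b - 1) - 6 * n)) = 0 := by
      linear_combination h
    have key : (b - 1) * ((4 * n ^ 2 - n + 1) * (b - 1) - 6 * n) = 0 := by omega
    rcases mul_eq_zero.mp key with h1 | h2
    · omega
    · exfalso
      have hb : b - 1 ≠ 0 := by
        intro hb0
        rw [hb0] at h2
        omega
      have hb2 : 1 ≤ (b - 1) ^ 2 := by
        rcases lt_or_gt_of_ne hb with h' | h' <;> nlinarith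
      nlinarith [sq_nonneg (b - 1), sq_nonneg n, sq_nonneg (n * (b - 1)), sq_nonneg (n ^ 2 * (b - 1))]
  · rintro rfl
    ring
end
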